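/- Let w : Ω_ε → ℝ be a bounded Borel function and C₁ > 0 a constant such that |M^ε w(x) − w(x)| ≤ C₁·ε³ for all x ∈ closure(Ω). Fix x₀ ∈ Ω_ε. Then: (i) for every Borel control σ, the sequence M_k := w(x_k) − C₁·k·ε³ is a supermartingale under P^{x₀}_σ with respect to the natural filtration {F_k}; (ii) if σ₀ is a Borel control satisfying M^ε_{σ₀(x)} w(x) = M^ε w(x) for all x ∈ closure(Ω), then the sequence N_k := w(x_k) + C₁·k·ε³ is a submartingale under P^{x₀}_{σ₀}. -/

import Mathlib

/-!
The chain never leaves `Ω_ε`: from `closure Ω` it jumps at most `ε`, and from `Γ_ε` it stays put.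
On `Ω_ε` the one-step mean of `w` under `γ_σ[x]` is `M^ε_{σ(x)} w (x)` on `closure Ω` and `w x`
on `Γ_ε`. Hence `E[w(x_{k+1}) | F_k] ≤ w(x_k) + C₁ε³` for every control, because
`M^ε_σ w ≤ M^ε w ≤ w + C₁ε³`, while for the optimal control `-w` satisfies the same bound,
because `M^ε_{σ₀} w = M^ε w ≥ w - C₁ε³`. The Markov property behind the conditional expectation
is checked on the cylinder events of `F_k`, where the trajectory measure is given by `cylProb`,
and extended to all of `F_k` by a π-λ argument.
-/

open MeasureTheory Metric Set
open scoped ENNReal NNReal Classical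

noncomputable section

abbrev EucN (N : ℕ) := EuclideanSpace ℝ (Fin N)

variable {N : ℕ}

/-- The directional mean value operator `M^ε_ξ v (x)`. -/
def mveOp (q ε : ℝ) (v : EucN N → ℝ) (ξ x : EucN N) : ℝ :=
  q * (⨍ y in ball x ε, v y) + (1 - q) * ((v (x + ε • ξ) + v (x - ε • ξ)) / 2)

/-- The mean value operator `M^ε v (x) = sup_{|ξ|=1} M^ε_ξ v (x)`. -/
def mvOp (q ε : ℝ) (v : EucN N → ℝ) (x : EucN N) : ℝ :=
  ⨆ ξ : sphere (0 : EucN N) 1, mveOp q ε v (ξ : EucN N) x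

/-- `Ω_ε = {x : dist(x,Ω) ≤ ε}`. -/
def Oeps (Ω : Set (EucN N)) (ε : ℝ) : Set (EucN N) := {x | Metric.infDist x Ω ≤ ε}

/-- `Γ_ε = Ω_ε \ closure Ω`. -/
def Geps (Ω : Set (EucN N)) (ε : ℝ) : Set (EucN N) := Oeps Ω ε \ closure Ω

/-- a Borel control with values in the unit sphere -/
def IsControl (σ : EucN N → EucN N) : Prop := Measurable σ ∧ ∀ x, ‖σ x‖ = 1

/-- the transition probability measures `γ_σ[x]` -/
def gamKer (q ε : ℝ) (Ω : Set (EucN N)) (σ : EucN N → EucN N) (x : EucN N) :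
    Measure (EucN N) :=
  if x ∈ closure Ω then
    ENNReal.ofReal q • ((volume (ball x ε))⁻¹ • volume.restrict (ball x ε)) +
      ENNReal.ofReal ((1 - q) / 2) •
        (Measure.dirac (x + ε • σ x) + Measure.dirac (x - ε • σ x))
  else Measure.dirac x

/-- probability of the cylinder `{ω : ω i ∈ A i, i ≤ n}` for the chain started at `x`
with transitions `γ`. -/
def cylProb (γ : EucN N → Measure (EucN N)) : ℕ → EucN N → (ℕ → Set (EucN N)) → ℝ≥0∞
  | 0, x, A => (A 0).indicator 1 x
  | n + 1, x, A => (A 0).indicator 1 x * ∫⁻ y, cylProb γ n y (fun i => A (i + 1)) ∂(γ x)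

/-- `P` is the trajectory (Ionescu-Tulcea/Kolmogorov) measure of the chain started at
`x₀` with transition kernel `γ`. -/
def IsTrajMeasure (γ : EucN N → Measure (EucN N)) (x₀ : EucN N)
    (P : Measure (ℕ → EucN N)) : Prop :=
  IsProbabilityMeasure P ∧
    ∀ (n : ℕ) (A : ℕ → Set (EucN N)), (∀ i, MeasurableSet (A i)) →
      P {ω | ∀ i ≤ n, ω i ∈ A i} = cylProb γ n x₀ A

/-- the natural filtration of the coordinate process -/
def trajFilt (N : ℕ) : Filtration ℕ (MeasurableSpace.pi : MeasurableSpace (ℕ → EucN N)) :=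
  Filtration.natural (fun n (ω : ℕ → EucN N) => ω n)
    (fun n => (measurable_pi_apply n).stronglyMeasurable)

open ProbabilityTheory Function

lemma MeasureTheory.Measure.integral_comp {α β E : Type*} [MeasurableSpace α]
    [MeasurableSpace β] [NormedAddCommGroup E] [NormedSpace ℝ E] {μ : Measure α}
    {κ : Kernel α β} {f : β → E}
    (hf : Integrable f (κ ∘ₘ μ)) : ∫ y, f y ∂(κ ∘ₘ μ) = ∫ x, ∫ y, f y ∂κ x ∂μ := by
  rw [Measure.comp_eq_comp_const_apply] at hf ⊢
  rw [Kernel.integral_comp hf, Kernel.const_apply]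

lemma MeasureTheory.Measure.bind_indicator_dirac {α : Type*} [MeasurableSpace α]
    (μ : Measure α) {s : Set α} (hs : MeasurableSet s) :
    μ.bind (s.indicator Measure.dirac) = μ.restrict s := by
  ext C hC
  rw [Measure.bind_apply hC (measurable_dirac.indicator hs).aemeasurable,
    Measure.restrict_apply hC, ← lintegral_indicator_one (hC.inter hs)]
  refine lintegral_congr fun y => ?_
  by_cases hy : y ∈ s <;> simp [hy, Measure.dirac_apply' _ hC, indicator_apply]

lemma MeasureTheory.abs_integral_le_of_ae_abs_le {α : Type*} [MeasurableSpace α]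
    {μ : Measure α} [IsProbabilityMeasure μ] {f : α → ℝ} {C : ℝ} (h : ∀ᵐ x ∂μ, |f x| ≤ C) :
    |∫ x, f x ∂μ| ≤ C := by
  simpa using
    norm_integral_le_of_norm_le_const (h.mono fun x hx => (Real.norm_eq_abs _).trans_le hx)

lemma measurable_measure_inter_ball {α : Type*} [PseudoMetricSpace α] [MeasurableSpace α]
    [OpensMeasurableSpace α] [SecondCountableTopology α] (μ : Measure α) [SFinite μ]
    {s : Set α} (hs : MeasurableSet s) (ε : ℝ) : Measurable fun x => μ (s ∩ ball x ε) :=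
  measurable_measure_prodMk_left ((measurable_snd hs).inter
    (measurableSet_lt (continuous_dist.comp continuous_swap).measurable measurable_const))

section Cylinders

def cylSet (n : ℕ) (A : ℕ → Set (EucN N)) : Set (ℕ → EucN N) := {ω | ∀ i ≤ n, ω i ∈ A i}

variable {n : ℕ} {A : ℕ → Set (EucN N)}

lemma cylSet_inter (B : ℕ → Set (EucN N)) : cylSet n A ∩ cylSet n B = cylSet n (A ⊓ B) := by
  ext ω
  simp [cylSet, forall_and]

lemma cylSet_update_of_lt {m : ℕ} (hnm : n < m) (B : Set (EucN N)) :
    cylSet n (update A m B) = cylSet n A := by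
  ext ω
  refine forall₂_congr fun i hi => ?_
  rw [update_of_ne (by omega)]

lemma cylSet_succ_update_univ : cylSet (n + 1) (update A (n + 1) univ) = cylSet n A := by
  ext ω
  refine ⟨fun h i hi => ?_, fun h i hi => ?_⟩
  · simpa [update_of_ne (show i ≠ n + 1 by omega)] using h i (by omega)
  · rcases Nat.le_succ_iff.1 hi with hi | rfl
    · simpa [update_of_ne (show i ≠ n + 1 by omega)] using h i hi
    · simp

lemma cylSet_update_inter (C : Set (EucN N)) :
    cylSet n (update A n (A n ∩ C)) = (· n) ⁻¹' C ∩ cylSet n A := by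
  ext ω
  constructor
  · intro h
    have hn := h n le_rfl
    rw [update_self] at hn
    refine ⟨hn.2, fun i hi => ?_⟩
    rcases eq_or_ne i n with rfl | hin
    · exact hn.1
    · simpa [update_of_ne hin] using h i hi
  · rintro ⟨hC, h⟩ i hi
    rcases eq_or_ne i n with rfl | hin
    · rw [update_self]
      exact ⟨h i hi, hC⟩
    · rw [update_of_ne hin]
      exact h i hi

lemma measurableSet_update (hA : ∀ i, MeasurableSet (A i)) {B : Set (EucN N)}
    (hB : MeasurableSet B) (m i : ℕ) : MeasurableSet (update A m B i) := by
  rcases eq_or_ne i m with rfl | h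
  · simpa using hB
  · simpa [update_of_ne h] using hA i

lemma measurable_eval_trajFilt {i : ℕ} (hi : i ≤ n) :
    Measurable[trajFilt N n] fun ω : ℕ → EucN N => ω i :=
  ((Filtration.stronglyAdapted_natural _ i).mono ((trajFilt N).mono hi)).measurable

lemma measurableSet_trajFilt_cylSet (hA : ∀ i, MeasurableSet (A i)) :
    MeasurableSet[trajFilt N n] (cylSet n A) := by
  simp only [cylSet, ofPred_forall]
  exact .iInter fun i => .iInter fun hi => measurable_eval_trajFilt hi (hA i)

lemma trajFilt_eq_generateFrom (n : ℕ) :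
    (trajFilt N n : MeasurableSpace (ℕ → EucN N)) =
      MeasurableSpace.generateFrom {s | ∃ A, (∀ i, MeasurableSet (A i)) ∧ cylSet n A = s} := by
  refine le_antisymm (iSup₂_le fun i hi => ?_) (MeasurableSpace.generateFrom_le ?_)
  · rintro _ ⟨C, hC, rfl⟩
    refine MeasurableSpace.measurableSet_generateFrom ⟨update (fun _ => univ) i C,
      fun j => ?_, ?_⟩
    · rcases eq_or_ne j i with rfl | hji <;> simp [update_of_ne, *]
    · ext ω
      refine ⟨fun h => by simpa using h i hi, fun hω j _ => ?_⟩
      rcases eq_or_ne j i with rfl | hji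
      · simpa using hω
      · simp [update_of_ne hji]
  · rintro _ ⟨A, hA, rfl⟩
    exact measurableSet_trajFilt_cylSet hA

lemma isPiSystem_cylSet (n : ℕ) :
    IsPiSystem {s | ∃ A : ℕ → Set (EucN N), (∀ i, MeasurableSet (A i)) ∧ cylSet n A = s} := by
  rintro _ ⟨A, hA, rfl⟩ _ ⟨B, hB, rfl⟩ -
  exact ⟨A ⊓ B, fun i => (hA i).inter (hB i), (cylSet_inter B).symm⟩

end Cylinders

section CylinderLaw

variable {κ : Kernel (EucN N) (EucN N)}

def cylLaw (κ : Kernel (EucN N) (EucN N)) : ℕ → EucN N → (ℕ → Set (EucN N)) → Measure (EucN N)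
  | 0, x, A => (A 0).indicator Measure.dirac x
  | n + 1, x, A => (A 0).indicator (fun x => (κ x).bind (cylLaw κ n · (fun i => A (i + 1)))) x

variable {A : ℕ → Set (EucN N)}

lemma measurable_cylLaw (n : ℕ) (hA : ∀ i, MeasurableSet (A i)) :
    Measurable (cylLaw κ n · A) := by
  induction n generalizing A with
  | zero => exact Measure.measurable_dirac.indicator (hA 0)
  | succ n ih =>
    exact ((Measure.measurable_bind' (ih fun i => hA (i + 1))).comp κ.measurable).indicator (hA 0)

lemma cylLaw_apply (n : ℕ) (x : EucN N) (hA : ∀ i, MeasurableSet (A i)) {C : Set (EucN N)}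
    (hC : MeasurableSet C) :
    cylLaw κ n x A C = cylProb κ n x (update A n (A n ∩ C)) := by
  induction n generalizing x A with
  | zero =>
    by_cases hx : x ∈ A 0 <;> simp [cylLaw, cylProb, hx, Measure.dirac_apply' _ hC, indicator_apply]
  | succ n ih =>
    have hshift : (fun i => update A (n + 1) (A (n + 1) ∩ C) (i + 1)) =
        update (fun i => A (i + 1)) n (A (n + 1) ∩ C) := by
      ext1 i
      rcases eq_or_ne i n with rfl | hin
      · simp
      · simp [update_of_ne hin, update_of_ne (show i + 1 ≠ n + 1 by omega)]
    by_cases hx : x ∈ A 0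
    · simp only [cylLaw, cylProb, indicator_of_mem hx, update_of_ne (Nat.succ_ne_zero n).symm,
        hshift]
      rw [Measure.bind_apply hC (measurable_cylLaw n fun i => hA (i + 1)).aemeasurable]
      simp [ih _ fun i => hA (i + 1)]
    · simp [cylLaw, cylProb, hx]

lemma cylLaw_succ (n : ℕ) (x : EucN N) (hA : ∀ i, MeasurableSet (A i)) :
    cylLaw κ (n + 1) x A = κ.restrict (hA (n + 1)) ∘ₘ cylLaw κ n x A := by
  induction n generalizing x A with
  | zero =>
    by_cases hx : x ∈ A 0
    · simp [cylLaw, hx, Measure.bind_indicator_dirac _ (hA 1),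
        Measure.dirac_bind (κ.restrict (hA 1)).measurable, Kernel.restrict_apply]
    · simp [cylLaw, hx]
  | succ n ih =>
    by_cases hx : x ∈ A 0
    · have ih' := fun y => ih y (fun i => hA (i + 1))
      simp only [cylLaw, indicator_of_mem hx] at ih' ⊢
      rw [funext ih', Measure.bind_bind (measurable_cylLaw n fun i => hA (i + 1)).aemeasurable
        (κ.restrict _).measurable.aemeasurable]
    · simp [cylLaw, hx]

lemma cylProb_const_eq_one [IsMarkovKernel κ] {S : Set (EucN N)}
    (hκS : ∀ x ∈ S, ∀ᵐ y ∂κ x, y ∈ S) (n : ℕ) {x : EucN N} (hx : x ∈ S) :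
    cylProb κ n x (fun _ => S) = 1 := by
  induction n generalizing x with
  | zero => simp [cylProb, hx]
  | succ n ih =>
    have hae : ∀ᵐ y ∂κ x, cylProb κ n y (fun _ => S) = 1 :=
      (hκS x hx).mono fun y hy => ih hy
    simp [cylProb, hx, lintegral_congr_ae hae]

end CylinderLaw

namespace IsTrajMeasure

variable {κ : Kernel (EucN N) (EucN N)} {x₀ : EucN N} {P : Measure (ℕ → EucN N)}
  {A : ℕ → Set (EucN N)}

lemma measure_cylSet (hP : IsTrajMeasure κ x₀ P) {n : ℕ} (hA : ∀ i, MeasurableSet (A i)) :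
    P (cylSet n A) = cylProb κ n x₀ A :=
  hP.2 n A hA

lemma map_eval_restrict_cylSet (hP : IsTrajMeasure κ x₀ P) (n : ℕ)
    (hA : ∀ i, MeasurableSet (A i)) :
    (P.restrict (cylSet n A)).map (· n) = cylLaw κ n x₀ A := by
  ext C hC
  rw [Measure.map_apply (measurable_pi_apply n) hC,
    Measure.restrict_apply (measurable_pi_apply n hC), ← cylSet_update_inter]
  exact (hP.measure_cylSet (measurableSet_update hA ((hA n).inter hC) n)).trans
    (cylLaw_apply n x₀ hA hC).symm

lemma map_eval_succ_restrict_cylSet (hP : IsTrajMeasure κ x₀ P) (k : ℕ)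
    (hA : ∀ i, MeasurableSet (A i)) :
    (P.restrict (cylSet k A)).map (· (k + 1)) = κ ∘ₘ (P.restrict (cylSet k A)).map (· k) := by
  set A' := update A (k + 1) univ
  have hA' := measurableSet_update hA .univ (k + 1)
  have hκ : κ.restrict (hA' (k + 1)) = κ := by
    ext x : 1
    simp
  calc (P.restrict (cylSet k A)).map (· (k + 1))
      = cylLaw κ (k + 1) x₀ A' := by
        rw [← hP.map_eval_restrict_cylSet (k + 1) hA', cylSet_succ_update_univ]
    _ = κ ∘ₘ cylLaw κ k x₀ A' := by rw [cylLaw_succ k x₀ hA', hκ]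
    _ = κ ∘ₘ (P.restrict (cylSet k A)).map (· k) := by
        rw [← hP.map_eval_restrict_cylSet k hA', cylSet_update_of_lt k.lt_succ_self]

lemma map_eval_succ_restrict (hP : IsTrajMeasure κ x₀ P) {k : ℕ} {s : Set (ℕ → EucN N)}
    (hs : MeasurableSet[trajFilt N k] s) :
    (P.restrict s).map (· (k + 1)) = κ ∘ₘ (P.restrict s).map (· k) := by
  have := hP.1
  have hle := (trajFilt N).le k
  ext C hC
  -- At `C`, the two sides are `μ₁ s` and `μ₂ s`; these measures agree on cylinders, which
  -- generate `F_k`.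
  set μ₁ := P.restrict ((· (k + 1)) ⁻¹' C)
  set μ₂ := P.withDensity fun ω => κ (ω k) C
  have hμ : ∀ t, MeasurableSet t →
      (P.restrict t).map (· (k + 1)) C = μ₁ t ∧ (κ ∘ₘ (P.restrict t).map (· k)) C = μ₂ t := by
    intro t ht
    refine ⟨?_, ?_⟩
    · rw [Measure.map_apply (measurable_pi_apply (k + 1)) hC,
        Measure.restrict_apply (measurable_pi_apply (k + 1) hC),
        Measure.restrict_apply ht, inter_comm]
    · rw [Measure.bind_apply hC κ.aemeasurable, withDensity_apply _ ht,
        lintegral_map (κ.measurable_coe hC) (measurable_pi_apply k)]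
  have hcyl : ∀ A : ℕ → Set (EucN N), (∀ i, MeasurableSet (A i)) →
      μ₁ (cylSet k A) = μ₂ (cylSet k A) := fun A hA => by
    have hm := hle _ (measurableSet_trajFilt_cylSet hA)
    rw [← (hμ _ hm).1, ← (hμ _ hm).2, hP.map_eval_succ_restrict_cylSet k hA]
  have htrim : μ₁.trim hle = μ₂.trim hle := by
    refine ext_of_generate_finite _ (trajFilt_eq_generateFrom k) (isPiSystem_cylSet k) ?_ ?_
    · rintro _ ⟨A, hA, rfl⟩
      rw [trim_measurableSet_eq hle (measurableSet_trajFilt_cylSet hA),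
        trim_measurableSet_eq hle (measurableSet_trajFilt_cylSet hA), hcyl A hA]
    · simpa [cylSet, trim_measurableSet_eq] using hcyl (fun _ => univ) fun _ => .univ
  rw [(hμ s (hle s hs)).1, (hμ s (hle s hs)).2, ← trim_measurableSet_eq hle hs, htrim,
    trim_measurableSet_eq hle hs]

lemma setIntegral_eval_succ (hP : IsTrajMeasure κ x₀ P) {k : ℕ} {s : Set (ℕ → EucN N)}
    (hs : MeasurableSet[trajFilt N k] s) {f : EucN N → ℝ} (hf : Measurable f)
    (hint : Integrable (fun ω : ℕ → EucN N => f (ω (k + 1))) P) :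
    ∫ ω in s, f (ω (k + 1)) ∂P = ∫ ω in s, ∫ y, f y ∂κ (ω k) ∂P := by
  have hmap := hP.map_eval_succ_restrict hs
  have hint' : Integrable f (κ ∘ₘ (P.restrict s).map (· k)) := by
    rw [← hmap, integrable_map_measure hf.aestronglyMeasurable
      (measurable_pi_apply (k + 1)).aemeasurable]
    exact hint.restrict
  calc ∫ ω in s, f (ω (k + 1)) ∂P
      = ∫ y, f y ∂(κ ∘ₘ (P.restrict s).map (· k)) := by
        rw [← hmap, integral_map (measurable_pi_apply (k + 1)).aemeasurable
          hf.aestronglyMeasurable]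
    _ = ∫ x, ∫ y, f y ∂κ x ∂(P.restrict s).map (· k) := Measure.integral_comp hint'
    _ = ∫ ω in s, ∫ y, f y ∂κ (ω k) ∂P :=
        integral_map (measurable_pi_apply k).aemeasurable
          hf.stronglyMeasurable.integral_kernel.aestronglyMeasurable

lemma ae_forall_mem [IsMarkovKernel κ] (hP : IsTrajMeasure κ x₀ P) {S : Set (EucN N)}
    (hS : MeasurableSet S) (hx₀ : x₀ ∈ S) (hκS : ∀ x ∈ S, ∀ᵐ y ∂κ x, y ∈ S) :
    ∀ᵐ ω ∂P, ∀ i, ω i ∈ S := by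
  have := hP.1
  refine ae_all_iff.2 fun n => ?_
  have hcyl : ∀ᵐ ω ∂P, ω ∈ cylSet n (fun _ => S) := by
    rw [ae_mem_iff_measure_eq ((trajFilt N).le n _
        (measurableSet_trajFilt_cylSet fun _ => hS)).nullMeasurableSet,
      hP.measure_cylSet fun _ => hS, cylProb_const_eq_one hκS n hx₀, measure_univ]
  exact hcyl.mono fun ω h => h n le_rfl

lemma supermartingale_sub [IsMarkovKernel κ] (hP : IsTrajMeasure κ x₀ P) {S : Set (EucN N)}
    (hS : MeasurableSet S) (hx₀ : x₀ ∈ S) (hκS : ∀ x ∈ S, ∀ᵐ y ∂κ x, y ∈ S) {f : EucN N → ℝ}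
    (hf : Measurable f) {C : ℝ} (hfC : ∀ x ∈ S, |f x| ≤ C) {c : ℝ}
    (hfc : ∀ x ∈ S, ∫ y, f y ∂κ x ≤ f x + c) :
    Supermartingale (fun (k : ℕ) ω => f (ω k) - k * c) (trajFilt N) P := by
  have := hP.1
  have hae := hP.ae_forall_mem hS hx₀ hκS
  have hint : ∀ i, Integrable (fun ω : ℕ → EucN N => f (ω i)) P := fun i =>
    .of_bound (hf.comp (measurable_pi_apply i)).aestronglyMeasurable C
      (hae.mono fun ω h => (Real.norm_eq_abs _).trans_le (hfC _ (h i)))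
  have hmean_int : ∀ i, Integrable (fun ω : ℕ → EucN N => ∫ y, f y ∂κ (ω i)) P := fun i =>
    .of_bound (hf.stronglyMeasurable.integral_kernel.measurable.comp
      (measurable_pi_apply i)).aestronglyMeasurable C
      (hae.mono fun ω h => (Real.norm_eq_abs _).trans_le
        (abs_integral_le_of_ae_abs_le ((hκS _ (h i)).mono hfC)))
  refine supermartingale_of_setIntegral_succ_le
    (fun k => ((hf.comp (measurable_eval_trajFilt le_rfl)).sub_const _).stronglyMeasurable)
    (fun k => (hint k).sub (integrable_const _)) fun k s hs => ?_
  have hstep : ∫ ω in s, f (ω (k + 1)) ∂P ≤ ∫ ω in s, f (ω k) ∂P + P.real s * c :=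
    calc ∫ ω in s, f (ω (k + 1)) ∂P
        = ∫ ω in s, ∫ y, f y ∂κ (ω k) ∂P := hP.setIntegral_eval_succ hs hf (hint (k + 1))
      _ ≤ ∫ ω in s, (f (ω k) + c) ∂P :=
          setIntegral_mono_ae_restrict (hmean_int k).integrableOn
            ((hint k).add (integrable_const c)).integrableOn
            (ae_restrict_of_ae (hae.mono fun ω h => hfc _ (h k)))
      _ = ∫ ω in s, f (ω k) ∂P + P.real s * c := by
          rw [integral_add (hint k).restrict (integrable_const c), setIntegral_const, smul_eq_mul]
  rw [integral_sub (hint _).restrict (integrable_const _),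
    integral_sub (hint _).restrict (integrable_const _), setIntegral_const, setIntegral_const]
  push_cast
  simp only [smul_eq_mul]
  linarith

end IsTrajMeasure

section MeanValue

variable {q ε : ℝ} {Ω : Set (EucN N)} {σ : EucN N → EucN N}

lemma measurable_gamKer (hσ : Measurable σ) : Measurable (gamKer q ε Ω σ) := by
  refine Measure.measurable_measure.2 fun s hs => ?_
  simp only [gamKer, apply_ite (fun μ : Measure (EucN N) => μ s)]
  refine Measurable.ite isClosed_closure.measurableSet ?_ ?_
  · simp only [Measure.add_apply, Measure.smul_apply, Measure.restrict_apply hs,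
      Measure.dirac_apply' _ hs, smul_eq_mul]
    have := measurable_measure_inter_ball volume hs ε
    have := measurable_measure_inter_ball (volume : Measure (EucN N)) .univ ε
    simp only [univ_inter] at this
    fun_prop
  · simpa [Measure.dirac_apply' _ hs] using measurable_one.indicator hs

lemma measurableSet_Oeps (Ω : Set (EucN N)) (ε : ℝ) : MeasurableSet (Oeps Ω ε) :=
  (isClosed_le (continuous_infDist_pt Ω) continuous_const).measurableSet

variable {x : EucN N}

lemma closedBall_subset_Oeps (hx : x ∈ closure Ω) : closedBall x ε ⊆ Oeps Ω ε := fun y hy =>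
  (infDist_le_infDist_add_dist (y := x)).trans (by simpa [infDist_zero_of_mem_closure hx] using hy)

lemma ae_mem_Oeps_gamKer (hε : 0 ≤ ε) (hσ : ∀ x, ‖σ x‖ = 1) (hx : x ∈ Oeps Ω ε) :
    ∀ᵐ y ∂gamKer q ε Ω σ x, y ∈ Oeps Ω ε := by
  have hO := measurableSet_Oeps Ω ε
  unfold gamKer
  split_ifs with hcl
  · have hB := closedBall_subset_Oeps (ε := ε) hcl
    have hpm : x + ε • σ x ∈ Oeps Ω ε ∧ x - ε • σ x ∈ Oeps Ω ε := by
      constructor <;> exact hB (by simp [norm_smul, hσ, abs_of_nonneg hε])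
    refine ae_add_measure_iff.2 ⟨Measure.ae_smul_measure (Measure.ae_smul_measure ?_ _) _,
      Measure.ae_smul_measure
        (ae_add_measure_iff.2 ⟨(ae_dirac_iff hO).2 hpm.1, (ae_dirac_iff hO).2 hpm.2⟩) _⟩
    exact ae_restrict_of_forall_mem measurableSet_ball fun y hy => hB (ball_subset_closedBall hy)
  · exact (ae_dirac_iff hO).2 hx

lemma isProbabilityMeasure_gamKer (hq0 : 0 ≤ q) (hq1 : q ≤ 1) (hε : 0 < ε) :
    IsProbabilityMeasure (gamKer q ε Ω σ x) := by
  unfold gamKer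
  split_ifs
  · constructor
    have hB : volume (ball x ε) ≠ 0 := (measure_ball_pos _ _ hε).ne'
    simp only [Measure.add_apply, Measure.smul_apply, Measure.restrict_apply_univ, measure_univ,
      smul_eq_mul, ENNReal.inv_mul_cancel hB measure_ball_lt_top.ne, mul_one]
    rw [← ENNReal.ofReal_one, ← ENNReal.ofReal_add zero_le_one zero_le_one,
      ← ENNReal.ofReal_mul (by linarith),
      ← ENNReal.ofReal_add hq0 (by nlinarith)]
    ring_nf
  · infer_instance

lemma integral_gamKer_of_mem_closure (hq0 : 0 ≤ q) (hq1 : q ≤ 1) (hε : 0 < ε)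
    (hx : x ∈ closure Ω) {f : EucN N → ℝ} (hf : Measurable f) (hfi : IntegrableOn f (ball x ε)) :
    ∫ y, f y ∂gamKer q ε Ω σ x = mveOp q ε f (σ x) x := by
  have havg : ⨍ y in ball x ε, f y =
      ∫ y, f y ∂((volume (ball x ε))⁻¹ • volume.restrict (ball x ε)) := by
    rw [average, Measure.restrict_apply_univ]
  have hδ : ∀ z, Integrable f (Measure.dirac z) := fun z =>
    integrable_dirac' hf.stronglyMeasurable (by simp)
  have hball : Integrable f ((volume (ball x ε))⁻¹ • volume.restrict (ball x ε)) :=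
    hfi.smul_measure (ENNReal.inv_ne_top.2 (measure_ball_pos _ _ hε).ne')
  rw [gamKer, if_pos hx, integral_add_measure (hball.smul_measure ENNReal.ofReal_ne_top)
      (((hδ _).add_measure (hδ _)).smul_measure ENNReal.ofReal_ne_top),
    integral_smul_measure, ← havg, integral_smul_measure, integral_add_measure (hδ _) (hδ _),
    integral_dirac, integral_dirac, mveOp, ENNReal.toReal_ofReal hq0,
    ENNReal.toReal_ofReal (by linarith), smul_eq_mul, smul_eq_mul]
  ring

lemma integrableOn_ball_of_abs_le (hx : x ∈ closure Ω) {w : EucN N → ℝ} (hw : Measurable w)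
    {C : ℝ} (hwC : ∀ y ∈ Oeps Ω ε, |w y| ≤ C) : IntegrableOn w (ball x ε) :=
  .of_bound measure_ball_lt_top hw.aestronglyMeasurable C <|
    ae_restrict_of_forall_mem measurableSet_ball fun y hy =>
      hwC y (closedBall_subset_Oeps hx (ball_subset_closedBall hy))

lemma mveOp_le_of_abs_le (hq0 : 0 ≤ q) (hq1 : q ≤ 1) (hε : 0 < ε) (hx : x ∈ closure Ω)
    {ξ : EucN N} (hξ : ‖ξ‖ = 1) {w : EucN N → ℝ} (hw : Measurable w) {C : ℝ}
    (hwC : ∀ y ∈ Oeps Ω ε, |w y| ≤ C) : mveOp q ε w ξ x ≤ C := by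
  -- `mveOp q ε w ξ x` is the mean of `w` under the transition law of the constant control `ξ`
  have := isProbabilityMeasure_gamKer (Ω := Ω) (σ := fun _ => ξ) (x := x) hq0 hq1 hε
  rw [← integral_gamKer_of_mem_closure (σ := fun _ => ξ) hq0 hq1 hε hx hw
    (integrableOn_ball_of_abs_le hx hw hwC)]
  have hae := ae_mem_Oeps_gamKer (q := q) (σ := fun _ => ξ) hε.le (fun _ => hξ)
    (closedBall_subset_Oeps hx (mem_closedBall_self hε.le))
  exact (le_abs_self _).trans (abs_integral_le_of_ae_abs_le (hae.mono hwC))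

lemma mveOp_le_mvOp (hq0 : 0 ≤ q) (hq1 : q ≤ 1) (hε : 0 < ε) (hx : x ∈ closure Ω)
    {ξ : EucN N} (hξ : ‖ξ‖ = 1) {w : EucN N → ℝ} (hw : Measurable w) {C : ℝ}
    (hwC : ∀ y ∈ Oeps Ω ε, |w y| ≤ C) : mveOp q ε w ξ x ≤ mvOp q ε w x :=
  le_ciSup (f := fun ζ : sphere (0 : EucN N) 1 => mveOp q ε w ζ x)
    ⟨C, forall_mem_range.2 fun ζ =>
      mveOp_le_of_abs_le hq0 hq1 hε hx (norm_eq_of_mem_sphere ζ) hw hwC⟩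
    ⟨ξ, by simpa using hξ⟩

lemma mveOp_neg (w : EucN N → ℝ) (ξ : EucN N) :
    mveOp q ε (-w) ξ x = -mveOp q ε w ξ x := by
  simp only [mveOp, Pi.neg_apply, average_neg]
  ring

end MeanValue

lemma supermartingale_of_mveOp_le {q ε : ℝ} (hq0 : 0 ≤ q) (hq1 : q ≤ 1) (hε : 0 < ε)
    {Ω : Set (EucN N)} {σ : EucN N → EucN N} (hσ : IsControl σ) {x₀ : EucN N}
    (hx₀ : x₀ ∈ Oeps Ω ε) {P : Measure (ℕ → EucN N)} (hP : IsTrajMeasure (gamKer q ε Ω σ) x₀ P)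
    {w : EucN N → ℝ} (hw : Measurable w) {C : ℝ} (hwC : ∀ x ∈ Oeps Ω ε, |w x| ≤ C) {c : ℝ}
    (hc : 0 ≤ c) (hmean : ∀ x ∈ closure Ω, mveOp q ε w (σ x) x ≤ w x + c) :
    Supermartingale (fun (k : ℕ) ω => w (ω k) - k * c) (trajFilt N) P := by
  let κ : Kernel (EucN N) (EucN N) := ⟨gamKer q ε Ω σ, measurable_gamKer hσ.1⟩
  have : IsMarkovKernel κ := ⟨fun _ => isProbabilityMeasure_gamKer hq0 hq1 hε⟩
  refine IsTrajMeasure.supermartingale_sub (κ := κ) hP (measurableSet_Oeps Ω ε) hx₀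
    (fun x hx => ae_mem_Oeps_gamKer hε.le hσ.2 hx) hw hwC fun x hx => ?_
  by_cases hcl : x ∈ closure Ω
  · calc ∫ y, w y ∂κ x = mveOp q ε w (σ x) x :=
          integral_gamKer_of_mem_closure hq0 hq1 hε hcl hw (integrableOn_ball_of_abs_le hcl hw hwC)
      _ ≤ w x + c := hmean x hcl
  · simp [κ, gamKer, hcl, hc]

theorem sub_super_martingale_general (p q ε : ℝ) (hp : 2 ≤ p)
    (hq : q = ((N : ℝ) + 2) / ((N : ℝ) + p)) (hε : 0 < ε)
    (Ω : Set (EucN N))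
    (w : EucN N → ℝ) (hwm : Measurable w) (hwb : ∃ C, ∀ x ∈ Oeps Ω ε, |w x| ≤ C)
    (C₁ : ℝ) (hC₁ : 0 < C₁)
    (hexp : ∀ x ∈ closure Ω, |mvOp q ε w x - w x| ≤ C₁ * ε ^ 3)
    (x₀ : EucN N) (hx₀ : x₀ ∈ Oeps Ω ε) :
    (∀ σ : EucN N → EucN N, IsControl σ →
      ∀ P : Measure (ℕ → EucN N), IsTrajMeasure (gamKer q ε Ω σ) x₀ P →
        Supermartingale (fun (k : ℕ) (ω : ℕ → EucN N) => w (ω k) - C₁ * k * ε ^ 3)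
          (trajFilt N) P) ∧
    ∀ σ₀ : EucN N → EucN N, IsControl σ₀ →
      (∀ x ∈ closure Ω, mveOp q ε w (σ₀ x) x = mvOp q ε w x) →
      ∀ P : Measure (ℕ → EucN N), IsTrajMeasure (gamKer q ε Ω σ₀) x₀ P →
        Submartingale (fun (k : ℕ) (ω : ℕ → EucN N) => w (ω k) + C₁ * k * ε ^ 3)
          (trajFilt N) P := by
  obtain ⟨C, hwC⟩ := hwb
  have hq0 : 0 ≤ q := hq ▸ by positivity
  have hq1 : q ≤ 1 := by rw [hq, div_le_one (by positivity)]; linarith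
  have hc : 0 ≤ C₁ * ε ^ 3 := by positivity
  refine ⟨fun σ hσ P hP => ?_, fun σ₀ hσ₀ hopt P hP => ?_⟩
  · have hsuper := supermartingale_of_mveOp_le hq0 hq1 hε hσ hx₀ hP hwm hwC hc fun x hx => by
      linarith [mveOp_le_mvOp hq0 hq1 hε hx (hσ.2 x) hwm hwC, (abs_le.1 (hexp x hx)).2]
    convert hsuper using 3
    ring
  · have hwC' : ∀ x ∈ Oeps Ω ε, |(-w) x| ≤ C := fun x hx => by simpa using hwC x hx
    have hsuper := supermartingale_of_mveOp_le hq0 hq1 hε hσ₀ hx₀ hP hwm.neg hwC' hc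
      fun x hx => by
        rw [mveOp_neg, hopt x hx, Pi.neg_apply]
        linarith [(abs_le.1 (hexp x hx)).1]
    have hneg : (fun (k : ℕ) (ω : ℕ → EucN N) => w (ω k) + C₁ * k * ε ^ 3) =
        -fun (k : ℕ) ω => (-w) (ω k) - k * (C₁ * ε ^ 3) := by
      ext k ω
      simp only [Pi.neg_apply]
      ring
    exact hneg ▸ hsuper.neg

/-- if `|M^ε w − w| ≤ C₁ ε³` on `closure Ω`, then (i) for every Borel
control `σ` the sequence `w(x_k) − C₁ k ε³` is a supermartingale, and (ii) for an
optimal Borel control `σ₀` the sequence `w(x_k) + C₁ k ε³` is a submartingale. -/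
theorem sub_super_martingale (hN : 2 ≤ N) (p q ε : ℝ) (hp : 2 ≤ p)
    (hq : q = ((N : ℝ) + 2) / ((N : ℝ) + p)) (hε : 0 < ε)
    (Ω : Set (EucN N)) (hΩo : IsOpen Ω) (hΩb : Bornology.IsBounded Ω)
    (w : EucN N → ℝ) (hwm : Measurable w) (hwb : ∃ C, ∀ x ∈ Oeps Ω ε, |w x| ≤ C)
    (C₁ : ℝ) (hC₁ : 0 < C₁)
    (hexp : ∀ x ∈ closure Ω, |mvOp q ε w x - w x| ≤ C₁ * ε ^ 3)
    (x₀ : EucN N) (hx₀ : x₀ ∈ Oeps Ω ε) :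
    (∀ σ : EucN N → EucN N, IsControl σ →
      ∀ P : Measure (ℕ → EucN N), IsTrajMeasure (gamKer q ε Ω σ) x₀ P →
        Supermartingale (fun (k : ℕ) (ω : ℕ → EucN N) => w (ω k) - C₁ * k * ε ^ 3)
          (trajFilt N) P) ∧
    ∀ σ₀ : EucN N → EucN N, IsControl σ₀ →
      (∀ x ∈ closure Ω, mveOp q ε w (σ₀ x) x = mvOp q ε w x) →
      ∀ P : Measure (ℕ → EucN N), IsTrajMeasure (gamKer q ε Ω σ₀) x₀ P →
        Submartingale (fun (k : ℕ) (ω : ℕ → EucN N) => w (ω k) + C₁ * k * ε ^ 3)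
          (trajFilt N) P :=
  sub_super_martingale_general p q ε hp hq hε Ω w hwm hwb C₁ hC₁ hexp x₀ hx₀
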